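/- arXiv:2209.12438 — 3 statements merged into one kernel-verified Lean document; each statement's English description precedes it below -/
import Mathlib

section
/- Let G be a finite simple connected graph and let D be a nonempty dominating target of G such that no vertex of D belongs to a diametral pair (that is, e(d) < diam(G) for every d ∈ D). Then for every diametral pair (x,y) of G, both x and y belong to N(D). -/
variable {V : Type*}

/-- The closed neighbourhood `N[v]` of a vertex. -/
def closedNbhd (G : SimpleGraph V) (v : V) : Set V := insert v (G.neighborSet v)

/-- `N[S] = ⋃_{v ∈ S} N[v]`. -/
def closedNbhdSet (G : SimpleGraph V) (S : Set V) : Set V := ⋃ v ∈ S, closedNbhd G v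

/-- A vertex `v` is an extremity if the subgraph induced on `V \ N[v]` is
connected (possibly empty). -/
def IsExtremity (G : SimpleGraph V) (v : V) : Prop :=
  (G.induce (closedNbhd G v)ᶜ).Preconnected

/-- `M` is a module: every vertex outside `M` is adjacent to all of `M` or none of `M`. -/
def IsModuleSet (G : SimpleGraph V) (M : Set V) : Prop :=
  ∀ z ∉ M, ∀ x ∈ M, ∀ y ∈ M, (G.Adj z x ↔ G.Adj z y)

/-- A graph is prime if its only modules are `∅`, `V` and the singletons. -/
def IsPrimeGraph (G : SimpleGraph V) : Prop :=
  ∀ M : Set V, IsModuleSet G M → M = ∅ ∨ M = Set.univ ∨ ∃ v, M = {v}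

/-- Eccentricity of a vertex in a finite graph. -/
noncomputable def ecc [Fintype V] (G : SimpleGraph V) (u : V) : ℕ :=
  Finset.univ.sup (G.dist u)

/-- Diameter of a finite graph. -/
noncomputable def gdiam [Fintype V] (G : SimpleGraph V) : ℕ :=
  Finset.univ.sup fun u => ecc G u

/-- `u ⊥_w v`: vertices `u` and `v` lie in different connected components of the
subgraph induced on `V \ N[w]`. -/
def Perp (G : SimpleGraph V) (w u v : V) : Prop :=
  u ∉ closedNbhd G w ∧ v ∉ closedNbhd G w ∧
    ¬ ∃ p : G.Walk u v, ∀ z ∈ p.support, z ∉ closedNbhd G w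

/-- `S` is `u`-transitive: for every `x ∈ S` and vertex `y` distinct from and
nonadjacent to `x`, `x ⊥_y u` implies `y ∈ S`. -/
def UTransitive (G : SimpleGraph V) (u : V) (S : Set V) : Prop :=
  ∀ x ∈ S, ∀ y : V, y ≠ x → ¬ G.Adj x y → Perp G y x u → y ∈ S

/-- `S` is a dominating set: every vertex lies in `N[S]`. -/
def IsDominatingSet (G : SimpleGraph V) (S : Set V) : Prop :=
  ∀ v : V, ∃ s ∈ S, v ∈ closedNbhd G s

/-- `D` is a dominating target: every superset of `D` inducing a connected
subgraph is a dominating set. -/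
def IsDomTarget (G : SimpleGraph V) (D : Set V) : Prop :=
  ∀ S : Set V, D ⊆ S → (G.induce S).Connected → IsDominatingSet G S

/-- An asteroidal set: an independent set `A` such that for every `a ∈ A`, all
vertices of `A \ {a}` lie in a single connected component of the subgraph
induced on `V \ N[a]`. -/
def IsAsteroidalSet (G : SimpleGraph V) (A : Set V) : Prop :=
  (A.Pairwise fun x y => ¬ G.Adj x y) ∧
  ∀ a ∈ A, ∀ b ∈ A, ∀ c ∈ A, b ≠ a → c ≠ a →
    ∃ p : G.Walk b c, ∀ z ∈ p.support, z ∉ closedNbhd G a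

/-!
Let `(x, y)` be a diametral pair. Every `d ∈ D` is strictly closer to `y` than `x` is, so `x ∉ D`.
If `x` had no neighbour in `D`, the vertices closer to `y` than `x` and not in `N[x]` would form a
connected set containing `D`: from any of them, a step along a shortest path to `y` stays inside.
That set would then dominate `x`, which none of its vertices does.
-/

namespace SimpleGraph

variable {G : SimpleGraph V}

lemma Reachable.exists_adj_dist_lt {z y : V} (h : G.Reachable z y) (hne : z ≠ y) :
    ∃ w, G.Adj z w ∧ G.dist w y < G.dist z y := by
  obtain ⟨p, hp⟩ := h.exists_walk_length_eq_dist
  cases p with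
  | nil => exact absurd rfl hne
  | cons hadj q =>
    refine ⟨_, hadj, ?_⟩
    have hq : G.dist _ y ≤ q.length := dist_le q
    rw [← hp, Walk.length_cons]
    omega

lemma induce_connected_of_exists_adj_dist_lt {S : Set V} {y : V} (hS : S.Nonempty)
    (hstep : ∀ z ∈ S, z ≠ y → ∃ w ∈ S, G.Adj z w ∧ G.dist w y < G.dist z y) :
    (G.induce S).Connected := by
  have hdescent : ∀ n, ∀ z (hz : z ∈ S), G.dist z y = n →
      ∃ hy : y ∈ S, (G.induce S).Reachable ⟨z, hz⟩ ⟨y, hy⟩ := by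
    intro n
    induction n using Nat.strong_induction_on with
    | _ n ih =>
      intro z hz hzn
      by_cases hzy : z = y
      · subst hzy
        exact ⟨hz, .refl _⟩
      obtain ⟨w, hw, hadj, hlt⟩ := hstep z hz hzy
      obtain ⟨hy, hreach⟩ := ih _ (hzn ▸ hlt) w hw rfl
      exact ⟨hy, (show (G.induce S).Adj ⟨z, hz⟩ ⟨w, hw⟩ from hadj).reachable.trans hreach⟩
  obtain ⟨z₀, hz₀⟩ := hS
  obtain ⟨hy, -⟩ := hdescent _ z₀ hz₀ rfl
  rw [connected_iff]
  refine ⟨fun a b => ?_, ⟨⟨y, hy⟩⟩⟩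
  exact (hdescent _ a.1 a.2 rfl).2.trans (hdescent _ b.1 b.2 rfl).2.symm

end SimpleGraph

open SimpleGraph

lemma mem_closedNbhdSet_of_forall_dist_lt {G : SimpleGraph V} (hG : G.Connected)
    {D : Set V} (hne : D.Nonempty) (hD : IsDomTarget G D) {x y : V}
    (hcloser : ∀ d ∈ D, G.dist d y < G.dist x y) :
    x ∈ closedNbhdSet G D := by
  by_contra hx
  set S : Set V := {z | G.dist z y < G.dist x y ∧ x ∉ closedNbhd G z}
  have hDS : D ⊆ S := fun d hd => ⟨hcloser d hd, fun hxd => hx (Set.mem_biUnion hd hxd)⟩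
  have hstep : ∀ z ∈ S, z ≠ y → ∃ w ∈ S, G.Adj z w ∧ G.dist w y < G.dist z y := by
    rintro z ⟨hzx, -⟩ hzy
    obtain ⟨w, hadj, hwz⟩ := (hG z y).exists_adj_dist_lt hzy
    refine ⟨w, ⟨by omega, ?_⟩, hadj, hwz⟩
    rintro (rfl | hxw)
    · omega
    · have hxw : G.dist x w = 1 := dist_eq_one_iff_adj.mpr (G.adj_symm hxw)
      have := hG.dist_triangle (u := x) (v := w) (w := y)
      omega
  obtain ⟨s, hsS, hxs⟩ := hD S hDS (induce_connected_of_exists_adj_dist_lt (hne.mono hDS) hstep) x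
  exact hsS.2 hxs

lemma dist_le_ecc [Fintype V] (G : SimpleGraph V) (u v : V) : G.dist u v ≤ ecc G u :=
  Finset.le_sup (f := G.dist u) (Finset.mem_univ v)

theorem stmt_7 [Fintype V] (G : SimpleGraph V) (hG : G.Connected)
    (D : Set V) (hne : D.Nonempty) (hD : IsDomTarget G D)
    (hnd : ∀ d ∈ D, ecc G d < gdiam G) :
    ∀ x y : V, G.dist x y = gdiam G →
      x ∈ closedNbhdSet G D \ D ∧ y ∈ closedNbhdSet G D \ D := by
  have hside : ∀ x y : V, G.dist x y = gdiam G → x ∈ closedNbhdSet G D \ D := by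
    intro x y hxy
    have hcloser : ∀ d ∈ D, G.dist d y < G.dist x y := fun d hd =>
      hxy ▸ (dist_le_ecc G d y).trans_lt (hnd d hd)
    exact ⟨mem_closedNbhdSet_of_forall_dist_lt hG hne hD hcloser,
      fun hxD => (hcloser x hxD).false⟩
  intro x y hxy
  exact ⟨hside x y hxy, hside y x (G.dist_comm ▸ hxy)⟩
end

section
/- Let G be a finite simple connected graph, let u and v be vertices with v ∈ F(u), and let X = { x ∈ N[u] : d(x,v) = e(u) }. Then there exists a set Y ⊆ V such that: v ∈ Y; Y is u-transitive; and d(y,x) ≤ d(v,x) for every y ∈ Y and every x ∈ X. -/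
variable {V : Type*}

/-!
Take `Y` to be the set of vertices at least as close as `v` to every vertex of `X`. It is
`u`-transitive: if `a ∈ Y` and `a ⊥_w u`, then a geodesic from `a` to any `x ∈ X ⊆ N[u]`,
continued to `u`, must meet `N[w]`, at a vertex `z ≠ a` of the geodesic. Hence
`d(w,x) ≤ 1 + d(z,x) ≤ d(a,z) + d(z,x) = d(a,x) ≤ d(v,x)`, so `w ∈ Y`.
-/

open SimpleGraph

section

variable {G : SimpleGraph V} {a u w x z : V}

lemma dist_le_one_of_mem_closedNbhd (h : z ∈ closedNbhd G w) : G.dist w z ≤ 1 := by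
  rcases h with rfl | hadj
  · simp
  · exact (dist_eq_one_iff_adj.mpr hadj).le

lemma exists_walk_support_subset_pair_of_mem_closedNbhd (hx : x ∈ closedNbhd G u) :
    ∃ r : G.Walk x u, ∀ z ∈ r.support, z ∈ ({x, u} : Set V) := by
  rcases hx with rfl | hadj
  · exact ⟨Walk.nil, by simp⟩
  · exact ⟨hadj.symm.toWalk, by simp⟩

lemma Perp.exists_mem_support_mem_closedNbhd (h : Perp G w a u) (hx : x ∈ closedNbhd G u)
    (p : G.Walk a x) : ∃ z ∈ p.support, z ∈ closedNbhd G w := by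
  obtain ⟨r, hr⟩ := exists_walk_support_subset_pair_of_mem_closedNbhd hx
  obtain ⟨z, hz, hzw⟩ : ∃ z ∈ (p.append r).support, z ∈ closedNbhd G w := by
    by_contra! hc
    exact h.2.2 ⟨p.append r, hc⟩
  refine ⟨z, ?_, hzw⟩
  rcases (p.mem_support_append_iff r).mp hz with hzp | hzr
  · exact hzp
  · rcases hr z hzr with rfl | rfl
    · exact p.end_mem_support
    · exact absurd hzw h.2.1

lemma SimpleGraph.Walk.dist_le_of_length_eq_dist_of_mem_closedNbhd {p : G.Walk a x}
    (hp : p.length = G.dist a x) (hz : z ∈ p.support) (hza : z ≠ a)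
    (hzw : z ∈ closedNbhd G w) : G.dist w x ≤ G.dist a x := by
  classical
  have hsplit : (p.takeUntil z hz).length + (p.dropUntil z hz).length = p.length := by
    rw [← Walk.length_append, p.take_spec hz]
  have htake : 1 ≤ (p.takeUntil z hz).length :=
    Nat.one_le_iff_ne_zero.mpr fun h0 => hza (Walk.eq_of_length_eq_zero h0).symm
  calc G.dist w x ≤ G.dist w z + G.dist z x :=
        (p.dropUntil z hz).reachable.dist_triangle_right w
    _ ≤ 1 + (p.dropUntil z hz).length :=
        Nat.add_le_add (dist_le_one_of_mem_closedNbhd hzw) (dist_le _)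
    _ ≤ p.length := by omega
    _ = G.dist a x := hp

lemma Perp.dist_le (hG : G.Connected) (h : Perp G w a u) (hx : x ∈ closedNbhd G u) :
    G.dist w x ≤ G.dist a x := by
  obtain ⟨p, hp⟩ := (hG a x).exists_walk_length_eq_dist
  obtain ⟨z, hz, hzw⟩ := h.exists_mem_support_mem_closedNbhd hx p
  exact p.dist_le_of_length_eq_dist_of_mem_closedNbhd hp hz
    (by rintro rfl; exact h.1 hzw) hzw

lemma uTransitive_setOf_forall_dist_le (hG : G.Connected) {X : Set V}
    (hX : X ⊆ closedNbhd G u) (v : V) :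
    UTransitive G u {y | ∀ x ∈ X, G.dist y x ≤ G.dist v x} :=
  fun _ ha _ _ _ h x hx => (h.dist_le hG (hX hx)).trans (ha x hx)

end

theorem stmt_13_general [Fintype V] (G : SimpleGraph V) (hG : G.Connected)
    (u v : V) :
    ∃ Y : Set V, v ∈ Y ∧ UTransitive G u Y ∧
      ∀ y ∈ Y, ∀ x ∈ closedNbhd G u, G.dist x v = ecc G u →
        G.dist y x ≤ G.dist v x :=
  ⟨{y | ∀ x ∈ {x ∈ closedNbhd G u | G.dist x v = ecc G u}, G.dist y x ≤ G.dist v x},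
    fun _ _ => le_rfl,
    uTransitive_setOf_forall_dist_le hG (fun _ hx => hx.1) v,
    fun _ hy x hx hxv => hy x ⟨hx, hxv⟩⟩

theorem stmt_13 [Fintype V] (G : SimpleGraph V) (hG : G.Connected)
    (u v : V) (hv : G.dist u v = ecc G u) :
    ∃ Y : Set V, v ∈ Y ∧ UTransitive G u Y ∧
      ∀ y ∈ Y, ∀ x ∈ closedNbhd G u, G.dist x v = ecc G u →
        G.dist y x ≤ G.dist v x :=
  stmt_13_general G hG u v
end

section
/- Let t ≥ 2 and let G be a finite simple connected graph that contains no induced K_{1,t} and that has a nonempty dominating target D of cardinality at most k. Then every set of pairwise nonadjacent extremities of G has cardinality at most k(t−1). -/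
variable {V : Type*}

/-!
Every extremity `a` is dominated by `D`: otherwise `D` lies in `V \ N[a]`, which induces a
connected subgraph and so must dominate `a`, impossible for a set avoiding `N[a]`. A vertex `d`
dominates at most `t - 1` vertices of an independent set: only itself if it belongs to the set,
and otherwise the dominated vertices are the leaves of an induced star centred at `d`.
-/

def InducedStarFree (G : SimpleGraph V) (t : ℕ) : Prop :=
  ¬ ∃ (c : V) (A : Set V), A.ncard = t ∧ (∀ a ∈ A, G.Adj c a) ∧
    A.Pairwise fun a b => ¬ G.Adj a b

section

variable {G : SimpleGraph V}

theorem mem_closedNbhd_comm {u v : V} : u ∈ closedNbhd G v ↔ v ∈ closedNbhd G u := by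
  simp only [closedNbhd, Set.mem_insert_iff, SimpleGraph.mem_neighborSet, G.adj_comm, eq_comm]

theorem IsDomTarget.exists_mem_closedNbhd_of_isExtremity {D : Set V} (hD : IsDomTarget G D)
    (hne : D.Nonempty) {a : V} (ha : IsExtremity G a) : ∃ d ∈ D, a ∈ closedNbhd G d := by
  by_contra! hfar
  have hsub : D ⊆ (closedNbhd G a)ᶜ := fun d hd => mem_closedNbhd_comm.not.mp (hfar d hd)
  have : Nonempty ↑(closedNbhd G a)ᶜ := hne.mono hsub |>.to_subtype
  obtain ⟨s, hs, has⟩ := hD _ hsub ⟨ha⟩ a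
  exact hs (mem_closedNbhd_comm.mp has)

theorem InducedStarFree.ncard_lt [Finite V] {t : ℕ} (hG : InducedStarFree G t) {c : V}
    {B : Set V} (hBc : B ⊆ G.neighborSet c) (hB : G.IsIndepSet B) : B.ncard < t := by
  by_contra! htB
  obtain ⟨B', hB'B, hB't⟩ := Set.exists_subset_card_eq htB
  exact hG ⟨c, B', hB't, fun a ha => hBc (hB'B ha), hB.mono hB'B⟩

theorem InducedStarFree.ncard_inter_closedNbhd_le [Finite V] {t : ℕ} (hG : InducedStarFree G t)
    (ht : 2 ≤ t) {A : Set V} (hA : G.IsIndepSet A) (c : V) :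
    (A ∩ closedNbhd G c).ncard ≤ t - 1 := by
  by_cases hcA : c ∈ A
  · have hsingle : A ∩ closedNbhd G c ⊆ {c} := by
      rintro a ⟨haA, rfl | hca⟩
      · rfl
      · exact absurd hca (hA hcA haA (G.ne_of_adj hca))
    have := Set.ncard_le_ncard hsingle
    rw [Set.ncard_singleton] at this
    omega
  · have hnbr : A ∩ closedNbhd G c ⊆ G.neighborSet c := by
      rintro a ⟨haA, rfl | hca⟩
      · exact absurd haA hcA
      · exact hca
    have := hG.ncard_lt hnbr (hA.mono Set.inter_subset_left)
    omega

end

theorem stmt_16_general [Fintype V] (G : SimpleGraph V)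
    (t k : ℕ) (ht : 2 ≤ t)
    (hK1t : ¬ ∃ (c : V) (A : Set V), A.ncard = t ∧ (∀ a ∈ A, G.Adj c a) ∧
      A.Pairwise fun a b => ¬ G.Adj a b)
    (D : Set V) (hne : D.Nonempty) (hD : IsDomTarget G D) (hk : D.ncard ≤ k) :
    ∀ A : Set V, (∀ a ∈ A, IsExtremity G a) →
      (A.Pairwise fun a b => ¬ G.Adj a b) → A.ncard ≤ k * (t - 1) := by
  classical
  intro A hExt hA
  have hcover : A ⊆ ⋃ d ∈ D.toFinset, A ∩ closedNbhd G d := by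
    intro a ha
    obtain ⟨d, hd, had⟩ := hD.exists_mem_closedNbhd_of_isExtremity hne (hExt a ha)
    exact Set.mem_biUnion (Set.mem_toFinset.mpr hd) ⟨ha, had⟩
  calc A.ncard ≤ ∑ d ∈ D.toFinset, (A ∩ closedNbhd G d).ncard :=
        (Set.ncard_le_ncard hcover).trans (D.toFinset.set_ncard_biUnion_le _)
    _ ≤ D.toFinset.card * (t - 1) := Finset.sum_le_card_nsmul _ _ _ fun d _ =>
        InducedStarFree.ncard_inter_closedNbhd_le hK1t ht hA d
    _ ≤ k * (t - 1) := by
        rw [← Set.ncard_eq_toFinset_card']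
        exact Nat.mul_le_mul_right _ hk

theorem stmt_16 [Fintype V] (G : SimpleGraph V) (hG : G.Connected)
    (t k : ℕ) (ht : 2 ≤ t)
    (hK1t : ¬ ∃ (c : V) (A : Set V), A.ncard = t ∧ (∀ a ∈ A, G.Adj c a) ∧
      A.Pairwise fun a b => ¬ G.Adj a b)
    (D : Set V) (hne : D.Nonempty) (hD : IsDomTarget G D) (hk : D.ncard ≤ k) :
    ∀ A : Set V, (∀ a ∈ A, IsExtremity G a) →
      (A.Pairwise fun a b => ¬ G.Adj a b) → A.ncard ≤ k * (t - 1) :=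
  stmt_16_general G t k ht hK1t D hne hD hk
end
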